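/- Let n, d ∈ ℕ₀ with 2n ≤ d + 3, and set k := 2d + 4 - 2n. Then there exists a constant C = C(d,n,ℓ) < ∞ such that for all V ∈ C^∞([-ℓ,ℓ]): sup_{x ∈ [-ℓ,ℓ]} (ℓ²-x²)^n |∂_x^d V(x)| ≤ C |V|_k. -/

import Mathlib

open MeasureTheory Set

set_option linter.unusedVariables false

noncomputable def opL (U V : ℝ → ℝ) : ℝ → ℝ := fun x =>
  U x * iteratedDeriv 4 V x + 4 * deriv U x * iteratedDeriv 3 V x
    + (6 * iteratedDeriv 2 U x - (U x)^3) * iteratedDeriv 2 V x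
    + (4/5) * x * deriv V x + V x / 5

noncomputable def Phi (U : ℝ → ℝ) : ℝ → ℝ := fun x =>
  2 * (deriv U x)^2 - 4 * U x * iteratedDeriv 2 U x + (U x)^4

noncomputable def semSq (l : ℝ) (j : ℕ) (V : ℝ → ℝ) : ℝ :=
  ∫ x in (-l)..l, (l^2 - x^2)^(j+2) * (iteratedDeriv j V x)^2

noncomputable def normSq (l : ℝ) (k : ℕ) (V : ℝ → ℝ) : ℝ :=
  ∑ j ∈ Finset.range (k+1), semSq l j V

noncomputable def hnorm (l : ℝ) (k : ℕ) (V : ℝ → ℝ) : ℝ := Real.sqrt (normSq l k V)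

noncomputable def uSq (l : ℝ) (U V : ℝ → ℝ) : ℝ := ∫ x in (-l)..l, U x * (V x)^2

noncomputable def u2Sq (l : ℝ) (U V : ℝ → ℝ) : ℝ :=
  (1/5) * (∫ x in (-l)..l, U x * (V x)^2)
  + (∫ x in (-l)..l, Phi U x * (deriv V x)^2)
  + (∫ x in (-l)..l, (U x)^2 * (iteratedDeriv 2 V x)^2)

noncomputable def DZ (V f : ℝ → ℝ) : ℝ → ℝ := fun x => (1 + deriv V x)⁻¹ * deriv f x

noncomputable def Theta (U V : ℝ → ℝ) : ℝ → ℝ := fun x => U x * (1 + deriv V x)⁻¹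

noncomputable def Nnl (U V : ℝ → ℝ) : ℝ → ℝ := fun x =>
  opL U V x + DZ V (DZ V (DZ V (Theta U V))) x - (Theta U V x)^2 * DZ V (Theta U V) x
    - (x + V x) / 5

lemma smooth_iterD {V : ℝ → ℝ} (hV : ContDiff ℝ ((⊤:ℕ∞):WithTop ℕ∞) V) (j : ℕ) :
    ContDiff ℝ ((⊤:ℕ∞):WithTop ℕ∞) (iteratedDeriv j V) := by
  induction j with
  | zero => simpa using hV
  | succ j ih =>
    rw [iteratedDeriv_succ]
    exact (contDiff_infty_iff_deriv.mp ih).2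

lemma cont_iterD {V : ℝ → ℝ} (hV : ContDiff ℝ ((⊤:ℕ∞):WithTop ℕ∞) V) (j : ℕ) :
    Continuous (iteratedDeriv j V) := (smooth_iterD hV j).continuous

lemma hasDerivAt_iterD {V : ℝ → ℝ} (hV : ContDiff ℝ ((⊤:ℕ∞):WithTop ℕ∞) V) (j : ℕ) (t : ℝ) :
    HasDerivAt (iteratedDeriv j V) (iteratedDeriv (j+1) V t) t := by
  rw [iteratedDeriv_succ]
  exact ((smooth_iterD hV j).differentiable (by simp) t).hasDerivAt

lemma cs_lemma (a b : ℝ) (hab : a ≤ b) (h : ℝ → ℝ) (hc : Continuous h) :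
    (∫ t in a..b, |h t|) ≤ Real.sqrt (b - a) * Real.sqrt (∫ t in a..b, (h t)^2) := by
  set A := ∫ t in a..b, (h t)^2 with hA
  set B := ∫ t in a..b, |h t| with hB
  have hA0 : 0 ≤ A := intervalIntegral.integral_nonneg hab (fun u _ => sq_nonneg _)
  have key : ∀ ε : ℝ, 0 < ε → B ≤ ε * (b - a) + A / (4 * ε) := by
    intro ε hε
    have hint1 : IntervalIntegrable (fun t => |h t|) volume a b :=
      hc.abs.intervalIntegrable _ _
    have hint2 : IntervalIntegrable (fun t => ε + (h t)^2 / (4*ε)) volume a b :=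
      (continuous_const.add ((hc.pow 2).div_const _)).intervalIntegrable _ _
    have hmono := intervalIntegral.integral_mono_on hab hint1 hint2
      (fun u _ => by
        rw [← sub_le_iff_le_add', le_div_iff₀ (by linarith : (0:ℝ) < 4*ε)]
        nlinarith [sq_nonneg (|h u| - 2*ε), sq_abs (h u)])
    have heq : (∫ t in a..b, (ε + (h t)^2 / (4*ε))) = ε * (b - a) + A / (4*ε) := by
      rw [intervalIntegral.integral_add (f := fun _ => ε) (g := fun t => (h t)^2 / (4*ε)) (intervalIntegrable_const)
        (((hc.pow 2).div_const _).intervalIntegrable _ _),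
        intervalIntegral.integral_const, intervalIntegral.integral_div]
      simp [hA, smul_eq_mul, mul_comm]
    rw [hB]; rw [heq] at hmono; exact hmono
  have hB0 : 0 ≤ B := intervalIntegral.integral_nonneg hab (fun u _ => abs_nonneg _)
  rcases hab.eq_or_lt with rfl | hlt
  · have : B = 0 := by simp [hB]
    rw [this]
    exact mul_nonneg (Real.sqrt_nonneg _) (Real.sqrt_nonneg _)
  · rcases hA0.eq_or_lt with hA0' | hApos
    · have hle : B ≤ 0 := by
        by_contra hcon
        push_neg at hcon
        have hba : 0 < b - a := by linarith
        have := key (B / (2*(b-a))) (div_pos hcon (by linarith))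
        rw [← hA0'] at this
        have h2 : B / (2*(b-a)) * (b - a) + 0 / (4 * (B / (2*(b-a)))) = B/2 := by
          field_simp
          ring
        rw [h2] at this
        linarith
      have : B = 0 := le_antisymm hle hB0
      rw [this]
      exact mul_nonneg (Real.sqrt_nonneg _) (Real.sqrt_nonneg _)
    · set ε := Real.sqrt A / (2 * Real.sqrt (b-a)) with hε
      have hsa : 0 < Real.sqrt A := Real.sqrt_pos.mpr hApos
      have hsb : 0 < Real.sqrt (b-a) := Real.sqrt_pos.mpr (by linarith)
      have h1 : Real.sqrt A ^ 2 = A := Real.sq_sqrt hA0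
      have h2 : Real.sqrt (b-a) ^ 2 = b - a := Real.sq_sqrt (by linarith)
      have hεpos : 0 < ε := by positivity
      have := key ε hεpos
      have heq : ε * (b - a) + A / (4 * ε) = Real.sqrt (b-a) * Real.sqrt A := by
        rw [hε]
        field_simp
        nlinarith [h1, h2]
      rw [heq] at this
      linarith [this]

lemma semSq_nonneg {l : ℝ} (hl : 0 < l) (j : ℕ) (V : ℝ → ℝ) : 0 ≤ semSq l j V := by
  apply intervalIntegral.integral_nonneg (by linarith)
  intro u hu
  have h1 : u^2 ≤ l^2 := by nlinarith [hu.1, hu.2]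
  have : (0:ℝ) ≤ l^2 - u^2 := by linarith
  positivity

lemma semSq_le_normSq {l : ℝ} (hl : 0 < l) {j k : ℕ} (hjk : j ≤ k) (V : ℝ → ℝ) :
    semSq l j V ≤ normSq l k V := by
  apply Finset.single_le_sum (f := fun i => semSq l i V)
    (fun i _ => semSq_nonneg hl i V)
  exact Finset.mem_range.mpr (by omega)

lemma sqrt_semSq_le {l : ℝ} (hl : 0 < l) {j k : ℕ} (hjk : j ≤ k) (V : ℝ → ℝ) :
    Real.sqrt (semSq l j V) ≤ hnorm l k V :=
  Real.sqrt_le_sqrt (semSq_le_normSq hl hjk V)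

lemma taylor_hasDeriv {V : ℝ → ℝ} (hV : ContDiff ℝ ((⊤:ℕ∞):WithTop ℕ∞) V)
    (d : ℕ) (x : ℝ) (e : ℕ) (t : ℝ) :
    HasDerivAt (fun s => ∑ i ∈ Finset.range (e+1),
        (x - s)^i / (Nat.factorial i) * iteratedDeriv (d+i) V s)
      ((x - t)^e / (Nat.factorial e) * iteratedDeriv (d+e+1) V t) t := by
  induction e with
  | zero =>
    have h := hasDerivAt_iterD hV d t
    have heq : (fun s => ∑ i ∈ Finset.range (0+1),
        (x - s)^i / (Nat.factorial i) * iteratedDeriv (d+i) V s)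
        = fun s => iteratedDeriv d V s := by
      funext s
      simp
    rw [heq]
    simpa using h
  | succ e ih =>
    have heq : (fun s => ∑ i ∈ Finset.range (e+1+1),
        (x - s)^i / (Nat.factorial i) * iteratedDeriv (d+i) V s)
        = fun s => (∑ i ∈ Finset.range (e+1),
            (x - s)^i / (Nat.factorial i) * iteratedDeriv (d+i) V s)
          + (x - s)^(e+1) / (Nat.factorial (e+1)) * iteratedDeriv (d+(e+1)) V s := by
      funext s
      rw [Finset.sum_range_succ]
    rw [heq]
    have h1 : HasDerivAt (fun s : ℝ => (x - s)^(e+1))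
        (-( (e+1) * (x - t)^e)) t := by
      have h0 : HasDerivAt (fun s : ℝ => x - s) (-1) t := by
        simpa using (hasDerivAt_id t).const_sub x
      have := h0.pow (e+1)
      refine this.congr_deriv ?_
      push_cast
      ring
    have h2 := hasDerivAt_iterD hV (d+(e+1)) t
    have hterm := (h1.div_const (Nat.factorial (e+1) : ℝ)).mul h2
    have hsum := ih.add hterm
    refine hsum.congr_deriv ?_
    have hfac : (Nat.factorial (e+1) : ℝ) = (e+1) * Nat.factorial e := by
      rw [Nat.factorial_succ]
      push_cast
      ring
    have hfp : (0:ℝ) < Nat.factorial e := by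
      exact_mod_cast Nat.factorial_pos e
    have hidx : d + (e+1) + 1 = d + e + 1 + 1 := by omega
    rw [hfac, hidx]
    field_simp
    ring

lemma point_eval (l : ℝ) (hl : 0 < l) (k j : ℕ) (hj : j + 1 ≤ k) :
    ∃ C : ℝ, 0 < C ∧ ∀ V : ℝ → ℝ, ContDiff ℝ ((⊤:ℕ∞):WithTop ℕ∞) V →
      |iteratedDeriv j V 0| ≤ C * hnorm l k V := by
  set γ : ℝ := (3/4) * l^2 with hγ
  have hγpos : 0 < γ := by positivity
  set Bj : ℝ := (γ^(j+2))⁻¹ with hBj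
  set Bj1 : ℝ := (γ^(j+3))⁻¹ with hBj1
  have hBjpos : 0 < Bj := by positivity
  have hBj1pos : 0 < Bj1 := by positivity
  set M : ℝ := (2/l) * Bj + Bj + Bj1 with hM
  have hMpos : 0 < M := by positivity
  clear_value γ Bj Bj1 M
  refine ⟨Real.sqrt M, Real.sqrt_pos.mpr hMpos, ?_⟩
  intro V hV
  set g := iteratedDeriv j V with hg
  set g' := iteratedDeriv (j+1) V with hg'
  have hcg : Continuous g := cont_iterD hV j
  have hcg' : Continuous g' := cont_iterD hV (j+1)
  -- subinterval weighted bounds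
  have hsub : ∀ i : ℕ, (∫ t in (0:ℝ)..(l/2), (iteratedDeriv i V t)^2)
      ≤ (γ^(i+2))⁻¹ * semSq l i V := by
    intro i
    have hci : Continuous (iteratedDeriv i V) := cont_iterD hV i
    have hstep1 : (∫ t in (0:ℝ)..(l/2), (iteratedDeriv i V t)^2)
        ≤ ∫ t in (0:ℝ)..(l/2), (γ^(i+2))⁻¹ * ((l^2 - t^2)^(i+2) * (iteratedDeriv i V t)^2) := by
      apply intervalIntegral.integral_mono_on (by linarith)
        ((hci.pow 2).intervalIntegrable _ _)
        ((continuous_const.mul (((continuous_const.sub (continuous_pow 2)).pow (i+2)).mul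
          (hci.pow 2))).intervalIntegrable _ _)
      intro t ht
      have ht1 : 0 ≤ t := ht.1
      have ht2 : t ≤ l/2 := ht.2
      have hw : γ ≤ l^2 - t^2 := by
        rw [hγ]; nlinarith
      have hpow : γ^(i+2) ≤ (l^2 - t^2)^(i+2) :=
        pow_le_pow_left₀ hγpos.le hw (i+2)
      have hq := sq_nonneg (iteratedDeriv i V t)
      show (iteratedDeriv i V t)^2 ≤ (γ^(i+2))⁻¹ * ((l^2 - t^2)^(i+2) * (iteratedDeriv i V t)^2)
      rw [← sub_nonneg]
      have key : 1 ≤ (γ^(i+2))⁻¹ * (l^2 - t^2)^(i+2) := by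
        rw [inv_mul_eq_div, le_div_iff₀ (by positivity : (0:ℝ) < γ^(i+2))]
        simpa using hpow
      nlinarith
    have hstep2 : (∫ t in (0:ℝ)..(l/2), (γ^(i+2))⁻¹ * ((l^2 - t^2)^(i+2) * (iteratedDeriv i V t)^2))
        = (γ^(i+2))⁻¹ * ∫ t in (0:ℝ)..(l/2), (l^2 - t^2)^(i+2) * (iteratedDeriv i V t)^2 :=
      intervalIntegral.integral_const_mul _ _
    have hstep3 : (∫ t in (0:ℝ)..(l/2), (l^2 - t^2)^(i+2) * (iteratedDeriv i V t)^2)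
        ≤ semSq l i V := by
      apply intervalIntegral.integral_mono_interval (by linarith) (by linarith) (by linarith)
      · filter_upwards [ae_restrict_mem measurableSet_Ioc] with t ht
        have h1 : t^2 ≤ l^2 := by nlinarith [ht.1, ht.2]
        have : (0:ℝ) ≤ l^2 - t^2 := by linarith
        positivity
      · exact ((((continuous_const.sub (continuous_pow 2)).pow (i+2)).mul
          ((cont_iterD hV i).pow 2))).intervalIntegrable _ _
    calc (∫ t in (0:ℝ)..(l/2), (iteratedDeriv i V t)^2)
        ≤ (γ^(i+2))⁻¹ * ∫ t in (0:ℝ)..(l/2), (l^2 - t^2)^(i+2) * (iteratedDeriv i V t)^2 := by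
          rw [← hstep2]; exact hstep1
      _ ≤ (γ^(i+2))⁻¹ * semSq l i V := by
          apply mul_le_mul_of_nonneg_left hstep3 (by positivity)
  -- FTC for g^2
  have hFTC : ∀ y : ℝ, (∫ t in (0:ℝ)..y, 2 * g t * g' t) = (g y)^2 - (g 0)^2 := by
    intro y
    apply intervalIntegral.integral_eq_sub_of_hasDerivAt
    · intro t _
      have h := (hasDerivAt_iterD hV j t).pow 2
      refine h.congr_deriv ?_
      push_cast
      ring
    · exact ((continuous_const.mul hcg).mul hcg').intervalIntegrable _ _
  set Q : ℝ := ∫ t in (0:ℝ)..(l/2), |2 * g t * g' t| with hQ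
  have hQ0 : 0 ≤ Q := intervalIntegral.integral_nonneg (by linarith) (fun u _ => abs_nonneg _)
  have hpt : ∀ y ∈ Icc (0:ℝ) (l/2), (g 0)^2 ≤ (g y)^2 + Q := by
    intro y hy
    have h1 : |∫ t in (0:ℝ)..y, 2 * g t * g' t| ≤ Q := by
      calc |∫ t in (0:ℝ)..y, 2 * g t * g' t|
          ≤ ∫ t in (0:ℝ)..y, |2 * g t * g' t| :=
            intervalIntegral.abs_integral_le_integral_abs hy.1
        _ ≤ Q := by
            apply intervalIntegral.integral_mono_interval le_rfl hy.1 hy.2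
            · exact Filter.Eventually.of_forall (fun t => abs_nonneg _)
            · exact ((continuous_const.mul hcg).mul hcg').abs.intervalIntegrable _ _
    have h2 := hFTC y
    have h3 : (g y)^2 - (g 0)^2 ≥ -Q := by
      rw [← h2]
      have := neg_abs_le (∫ t in (0:ℝ)..y, 2 * g t * g' t)
      linarith
    linarith
  -- integrate in y
  have hint1 : (∫ y in (0:ℝ)..(l/2), (g 0)^2) ≤ ∫ y in (0:ℝ)..(l/2), ((g y)^2 + Q) := by
    apply intervalIntegral.integral_mono_on (by linarith)
      (intervalIntegrable_const)
      (((hcg.pow 2).add continuous_const).intervalIntegrable _ _)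
    exact hpt
  have hconst : (∫ y in (0:ℝ)..(l/2), (g 0)^2) = (l/2) * (g 0)^2 := by
    rw [intervalIntegral.integral_const]
    simp [smul_eq_mul]
  have hadd : (∫ y in (0:ℝ)..(l/2), ((g y)^2 + Q))
      = (∫ y in (0:ℝ)..(l/2), (g y)^2) + (l/2) * Q := by
    rw [intervalIntegral.integral_add (f := fun y => (g y)^2) (g := fun _ => Q) ((hcg.pow 2).intervalIntegrable _ _)
      intervalIntegrable_const, intervalIntegral.integral_const]
    simp [smul_eq_mul]
  -- bound Q
  have hQbound : Q ≤ (∫ t in (0:ℝ)..(l/2), (g t)^2) + (∫ t in (0:ℝ)..(l/2), (g' t)^2) := by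
    have : Q ≤ ∫ t in (0:ℝ)..(l/2), ((g t)^2 + (g' t)^2) := by
      apply intervalIntegral.integral_mono_on (by linarith)
        (((continuous_const.mul hcg).mul hcg').abs.intervalIntegrable _ _)
        (((hcg.pow 2).add (hcg'.pow 2)).intervalIntegrable _ _)
      intro u _
      have h1 : |2 * g u * g' u| ≤ (g u)^2 + (g' u)^2 := by
        rw [abs_le]
        constructor <;> nlinarith [sq_nonneg (g u - g' u), sq_nonneg (g u + g' u)]
      exact h1
    rw [intervalIntegral.integral_add (f := fun t => (g t)^2) (g := fun t => (g' t)^2) ((hcg.pow 2).intervalIntegrable _ _)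
      ((hcg'.pow 2).intervalIntegrable _ _)] at this
    exact this
  -- combine
  have hjk : j ≤ k := by omega
  have hj1k : j + 1 ≤ k := hj
  have hsemj := semSq_le_normSq hl hjk V
  have hsemj1 := semSq_le_normSq hl hj1k V
  have hsem_nonneg : 0 ≤ normSq l k V := le_trans (semSq_nonneg hl j V) hsemj
  have hgj := hsub j
  have hgj1 := hsub (j+1)
  have hfinal : (g 0)^2 ≤ M * normSq l k V := by
    have h1 : (l/2) * (g 0)^2 ≤ (∫ y in (0:ℝ)..(l/2), (g y)^2) + (l/2) * Q := by
      rw [← hconst, ← hadd]; exact hint1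
    have h2 : (∫ y in (0:ℝ)..(l/2), (g y)^2) ≤ Bj * normSq l k V := by
      calc (∫ y in (0:ℝ)..(l/2), (g y)^2) ≤ Bj * semSq l j V := by rw [hBj]; exact hgj
        _ ≤ Bj * normSq l k V := mul_le_mul_of_nonneg_left hsemj hBjpos.le
    have h3 : (∫ t in (0:ℝ)..(l/2), (g' t)^2) ≤ Bj1 * normSq l k V := by
      have : (j+1)+2 = j+3 := by omega
      calc (∫ t in (0:ℝ)..(l/2), (g' t)^2) ≤ (γ^((j+1)+2))⁻¹ * semSq l (j+1) V := hgj1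
        _ = Bj1 * semSq l (j+1) V := by rw [this, ← hBj1]
        _ ≤ Bj1 * normSq l k V := mul_le_mul_of_nonneg_left hsemj1 hBj1pos.le
    have h4 : Q ≤ Bj * normSq l k V + Bj1 * normSq l k V := le_trans hQbound (by linarith)
    have hl2 : 0 < l/2 := by linarith
    -- (l/2) g0^2 ≤ Bj N + (l/2)(Bj N + Bj1 N)
    have h5 : (l/2) * (g 0)^2 ≤ Bj * normSq l k V + (l/2) * (Bj * normSq l k V + Bj1 * normSq l k V) := by
      have := mul_le_mul_of_nonneg_left h4 hl2.le
      linarith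
    have h6 : (g 0)^2 ≤ (2/l) * (Bj * normSq l k V) + (Bj * normSq l k V + Bj1 * normSq l k V) := by
      have hh := mul_le_mul_of_nonneg_left h5 (by positivity : (0:ℝ) ≤ 2/l)
      have heq1 : (2/l) * ((l/2) * (g 0)^2) = (g 0)^2 := by
        have hc1 : (2/l) * (l/2) = 1 := by field_simp
        calc (2/l) * ((l/2) * (g 0)^2) = ((2/l) * (l/2)) * (g 0)^2 := by ring
          _ = (g 0)^2 := by rw [hc1]; ring
      rw [heq1] at hh
      have hc1 : (2/l) * (l/2) = 1 := by field_simp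
      calc (g 0)^2 ≤ (2/l) * (Bj * normSq l k V + (l/2) * (Bj * normSq l k V + Bj1 * normSq l k V)) := hh
        _ = (2/l) * (Bj * normSq l k V) + ((2/l) * (l/2)) * (Bj * normSq l k V + Bj1 * normSq l k V) := by
            ring
        _ = (2/l) * (Bj * normSq l k V) + (Bj * normSq l k V + Bj1 * normSq l k V) := by
            rw [hc1]; ring
    calc (g 0)^2 ≤ (2/l) * (Bj * normSq l k V) + (Bj * normSq l k V + Bj1 * normSq l k V) := h6
      _ = M * normSq l k V := by rw [hM]; ring
  have habs : |g 0| = Real.sqrt ((g 0)^2) := (Real.sqrt_sq_eq_abs _).symm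
  rw [habs]
  calc Real.sqrt ((g 0)^2) ≤ Real.sqrt (M * normSq l k V) := Real.sqrt_le_sqrt hfinal
    _ = Real.sqrt M * Real.sqrt (normSq l k V) := Real.sqrt_mul hMpos.le _
    _ = Real.sqrt M * hnorm l k V := rfl

lemma term2 (l : ℝ) (hl : 0 < l) (n e p k : ℕ) (hpe : p = n + e) (hp : 2*p = k+2)
    (x a b : ℝ) (hab : a ≤ b) (hal : -l ≤ a) (hbl : b ≤ l)
    (h0x : 0 ≤ l^2 - x^2)
    (hkey : ∀ t ∈ Icc a b, l^2 - x^2 ≤ l^2 - t^2 ∧ l * |x - t| ≤ l^2 - t^2)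
    (V : ℝ → ℝ) (hV : ContDiff ℝ ((⊤:ℕ∞):WithTop ℕ∞) V) :
    (l^2-x^2)^n * |∫ t in a..b, (x-t)^e / (Nat.factorial e) * iteratedDeriv k V t|
      ≤ Real.sqrt (2*l) / (l^e * (Nat.factorial e)) * hnorm l k V := by
  set gk := iteratedDeriv k V with hgk
  have hcgk : Continuous gk := cont_iterD hV k
  have hfe : (0:ℝ) < (Nat.factorial e : ℝ) := by exact_mod_cast Nat.factorial_pos e
  have hle : (0:ℝ) < l^e := by positivity
  set f : ℝ → ℝ := fun t => (x-t)^e / (Nat.factorial e) * gk t with hf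
  set h : ℝ → ℝ := fun t => (l^2-t^2)^p * gk t with hh
  have hcf : Continuous f := (((continuous_const.sub continuous_id).pow e).div_const _).mul hcgk
  have hch : Continuous h := ((continuous_const.sub (continuous_pow 2)).pow p).mul hcgk
  have step1 : (l^2-x^2)^n * |∫ t in a..b, f t| ≤ ∫ t in a..b, (l^2-x^2)^n * |f t| := by
    rw [intervalIntegral.integral_const_mul]
    exact mul_le_mul_of_nonneg_left
      (intervalIntegral.abs_integral_le_integral_abs hab) (by positivity)
  have step2 : (∫ t in a..b, (l^2-x^2)^n * |f t|)
      ≤ ∫ t in a..b, 1/(l^e * (Nat.factorial e)) * |h t| := by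
    apply intervalIntegral.integral_mono_on hab
      ((continuous_const.mul hcf.abs).intervalIntegrable _ _)
      ((continuous_const.mul hch.abs).intervalIntegrable _ _)
    intro t ht
    obtain ⟨hw1, hw2⟩ := hkey t ht
    have hw0 : 0 ≤ l^2 - t^2 := le_trans (mul_nonneg hl.le (abs_nonneg _)) hw2
    have key : (l^2-x^2)^n * |x-t|^e * l^e ≤ (l^2-t^2)^p := by
      have k1 : (l^2-x^2)^n ≤ (l^2-t^2)^n := pow_le_pow_left₀ h0x hw1 n
      have k2 : (|x-t| * l)^e ≤ (l^2-t^2)^e :=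
        pow_le_pow_left₀ (by positivity) (by rw [mul_comm]; exact hw2) e
      calc (l^2-x^2)^n * |x-t|^e * l^e = (l^2-x^2)^n * (|x - t| * l)^e := by
            rw [mul_pow]; ring
        _ ≤ (l^2-t^2)^n * (l^2-t^2)^e :=
            mul_le_mul k1 k2 (by positivity) (by positivity)
        _ = (l^2-t^2)^p := by rw [← pow_add, hpe]
    have hfabs : |f t| = |x-t|^e / (Nat.factorial e) * |gk t| := by
      show |(x-t)^e / (Nat.factorial e) * gk t| = _
      rw [abs_mul, abs_div, abs_pow]
      simp [Nat.abs_cast]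
    have hhabs : |h t| = (l^2-t^2)^p * |gk t| := by
      show |(l^2-t^2)^p * gk t| = _
      rw [abs_mul, abs_pow, abs_of_nonneg hw0]
    show (l^2-x^2)^n * |f t| ≤ 1/(l^e * (Nat.factorial e)) * |h t|
    rw [hfabs, hhabs]
    have e1 : (l^2-x^2)^n * (|x-t|^e / (Nat.factorial e) * |gk t|)
        = ((l^2-x^2)^n * |x-t|^e * |gk t|) / (Nat.factorial e) := by ring
    have e2 : 1/(l^e * (Nat.factorial e)) * ((l^2-t^2)^p * |gk t|)
        = ((l^2-t^2)^p * |gk t|) / (l^e * (Nat.factorial e)) := by ring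
    rw [e1, e2, div_le_div_iff₀ hfe (by positivity)]
    nlinarith [mul_le_mul_of_nonneg_right
      (mul_le_mul_of_nonneg_right key (abs_nonneg (gk t))) hfe.le]
  have step3 : (∫ t in a..b, 1/(l^e * (Nat.factorial e)) * |h t|)
      = 1/(l^e * (Nat.factorial e)) * ∫ t in a..b, |h t| :=
    intervalIntegral.integral_const_mul _ _
  have step4 : (∫ t in a..b, |h t|) ≤ Real.sqrt (b-a) * Real.sqrt (∫ t in a..b, (h t)^2) :=
    cs_lemma a b hab h hch
  have step5 : (∫ t in a..b, (h t)^2) ≤ semSq l k V := by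
    have hsq : ∀ t : ℝ, (h t)^2 = (l^2-t^2)^(k+2) * (iteratedDeriv k V t)^2 := by
      intro t
      show ((l^2-t^2)^p * gk t)^2 = _
      rw [mul_pow, ← pow_mul, show p*2 = k+2 by omega, hgk]
    calc (∫ t in a..b, (h t)^2)
        = ∫ t in a..b, (l^2-t^2)^(k+2) * (iteratedDeriv k V t)^2 := by
          simp only [hsq]
      _ ≤ semSq l k V := by
          apply intervalIntegral.integral_mono_interval hal hab hbl
          · apply Filter.Eventually.of_forall
            intro t
            have hev : Even (k+2) := ⟨p, by omega⟩
            exact mul_nonneg (hev.pow_nonneg _) (sq_nonneg _)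
          · exact (((continuous_const.sub (continuous_pow 2)).pow (k+2)).mul
              ((cont_iterD hV k).pow 2)).intervalIntegrable _ _
  have step6 : Real.sqrt (b-a) ≤ Real.sqrt (2*l) := Real.sqrt_le_sqrt (by linarith)
  have step7 : Real.sqrt (∫ t in a..b, (h t)^2) ≤ hnorm l k V :=
    le_trans (Real.sqrt_le_sqrt step5) (sqrt_semSq_le hl le_rfl V)
  have hint2 : (∫ t in a..b, (h t)^2) ≥ 0 :=
    intervalIntegral.integral_nonneg hab (fun u _ => sq_nonneg _)
  calc (l^2-x^2)^n * |∫ t in a..b, f t|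
      ≤ ∫ t in a..b, (l^2-x^2)^n * |f t| := step1
    _ ≤ ∫ t in a..b, 1/(l^e * (Nat.factorial e)) * |h t| := step2
    _ = 1/(l^e * (Nat.factorial e)) * ∫ t in a..b, |h t| := step3
    _ ≤ 1/(l^e * (Nat.factorial e)) * (Real.sqrt (b-a) * Real.sqrt (∫ t in a..b, (h t)^2)) :=
        mul_le_mul_of_nonneg_left step4 (by positivity)
    _ ≤ 1/(l^e * (Nat.factorial e)) * (Real.sqrt (2*l) * hnorm l k V) :=
        mul_le_mul_of_nonneg_left
          (mul_le_mul step6 step7 (Real.sqrt_nonneg _) (Real.sqrt_nonneg _))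
          (by positivity)
    _ = Real.sqrt (2*l) / (l^e * (Nat.factorial e)) * hnorm l k V := by ring

set_option maxHeartbeats 2000000 in
theorem stmt17 (l : ℝ) (hl : 0 < l) (n d : ℕ) (hnd : 2*n ≤ d + 3) (k : ℕ)
    (hk : k = 2*d + 4 - 2*n) :
    ∃ C : ℝ, 0 < C ∧ ∀ V : ℝ → ℝ, ContDiff ℝ (⊤ : ℕ∞) V →
      ∀ x ∈ Set.Icc (-l) l, (l^2 - x^2)^n * |iteratedDeriv d V x| ≤ C * hnorm l k V := by
  set e := d + 3 - 2*n with he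
  have hk' : k = d + e + 1 := by omega
  have hp2 : 2*(n+e) = k + 2 := by omega
  have hptAll : ∀ i : ℕ, ∃ C : ℝ, 0 < C ∧ ∀ W : ℝ → ℝ, ContDiff ℝ ((⊤:ℕ∞):WithTop ℕ∞) W →
      (i + 1 ≤ k → |iteratedDeriv i W 0| ≤ C * hnorm l k W) := by
    intro i
    by_cases hik : i + 1 ≤ k
    · obtain ⟨C, hC, hC2⟩ := point_eval l hl k i hik
      exact ⟨C, hC, fun W hW _ => hC2 W hW⟩
    · exact ⟨1, one_pos, fun W hW hcon => absurd hcon hik⟩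
  choose Cf hCf0 hCf using hptAll
  set S := ∑ i ∈ Finset.range (e+1), l^i / (Nat.factorial i) * Cf (d+i) with hS
  have hS0 : 0 ≤ S :=
    Finset.sum_nonneg (fun i _ => mul_nonneg (by positivity) (hCf0 (d+i)).le)
  set c₀ := Real.sqrt (2*l) / (l^e * (Nat.factorial e)) with hc₀
  have hfe : (0:ℝ) < (Nat.factorial e : ℝ) := by exact_mod_cast Nat.factorial_pos e
  have hc₀0 : 0 ≤ c₀ := by positivity
  clear_value S c₀
  have hCpos : 0 < l^(2*n) * S + c₀ + 1 := by
    have h1 : 0 ≤ l^(2*n) * S := mul_nonneg (pow_nonneg hl.le (2*n)) hS0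
    linarith
  refine ⟨l^(2*n) * S + c₀ + 1, hCpos, ?_⟩
  intro V hVω x hx
  have hV : ContDiff ℝ ((⊤:ℕ∞):WithTop ℕ∞) V := hVω.of_le (by simp)
  have hnn : 0 ≤ hnorm l k V := Real.sqrt_nonneg _
  have hx1 : -l ≤ x := hx.1
  have hx2 : x ≤ l := hx.2
  have h0x : 0 ≤ l^2 - x^2 := by nlinarith
  -- Taylor representation
  have hF' : ∀ t : ℝ, HasDerivAt (fun s => ∑ i ∈ Finset.range (e+1),
      (x - s)^i / (Nat.factorial i) * iteratedDeriv (d+i) V s)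
      ((x - t)^e / (Nat.factorial e) * iteratedDeriv k V t) t := by
    intro t
    have h := taylor_hasDeriv hV d x e t
    rwa [show d + e + 1 = k from hk'.symm] at h
  have hInt : IntervalIntegrable
      (fun t => (x-t)^e / (Nat.factorial e) * iteratedDeriv k V t) volume 0 x :=
    ((((continuous_const.sub continuous_id).pow e).div_const _).mul
      (cont_iterD hV k)).intervalIntegrable _ _
  have hFTC := intervalIntegral.integral_eq_sub_of_hasDerivAt (fun t _ => hF' t) hInt
  have hFTC2 : (∫ t in (0:ℝ)..x, (x-t)^e / (Nat.factorial e) * iteratedDeriv k V t)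
      = (∑ i ∈ Finset.range (e+1), (x - x)^i / (Nat.factorial i) * iteratedDeriv (d+i) V x)
        - (∑ i ∈ Finset.range (e+1), (x - 0)^i / (Nat.factorial i) * iteratedDeriv (d+i) V 0) := by
    simpa using hFTC
  have hFx : (∑ i ∈ Finset.range (e+1), (x - x)^i / (Nat.factorial i) * iteratedDeriv (d+i) V x)
      = iteratedDeriv d V x := by
    rw [Finset.sum_eq_single 0]
    · simp
    · intro i hi hne
      rw [sub_self, zero_pow hne, zero_div, zero_mul]
    · intro h0
      exact absurd (Finset.mem_range.mpr (by omega)) h0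
  rw [hFx] at hFTC2
  have hrep : iteratedDeriv d V x
      = (∑ i ∈ Finset.range (e+1), (x - 0)^i / (Nat.factorial i) * iteratedDeriv (d+i) V 0)
        + ∫ t in (0:ℝ)..x, (x-t)^e / (Nat.factorial e) * iteratedDeriv k V t := by
    rw [hFTC2]; ring
  -- polynomial part
  have hxl : |x| ≤ l := abs_le.mpr ⟨hx1, hx2⟩
  have hpoly : |∑ i ∈ Finset.range (e+1), (x - 0)^i / (Nat.factorial i) * iteratedDeriv (d+i) V 0|
      ≤ S * hnorm l k V := by
    calc |∑ i ∈ Finset.range (e+1), (x - 0)^i / (Nat.factorial i) * iteratedDeriv (d+i) V 0|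
        ≤ ∑ i ∈ Finset.range (e+1), |(x - 0)^i / (Nat.factorial i) * iteratedDeriv (d+i) V 0| :=
          Finset.abs_sum_le_sum_abs _ _
      _ ≤ ∑ i ∈ Finset.range (e+1), l^i / (Nat.factorial i) * (Cf (d+i) * hnorm l k V) := by
          apply Finset.sum_le_sum
          intro i hi
          have hie : i < e + 1 := Finset.mem_range.mp hi
          have habs : |(x - 0)^i / (Nat.factorial i) * iteratedDeriv (d+i) V 0|
              = |x|^i / (Nat.factorial i) * |iteratedDeriv (d+i) V 0| := by
            rw [abs_mul, abs_div, abs_pow, sub_zero]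
            simp [Nat.abs_cast]
          rw [habs]
          have hfi : (0:ℝ) < (Nat.factorial i : ℝ) := by exact_mod_cast Nat.factorial_pos i
          apply mul_le_mul
          · gcongr
          · exact hCf (d+i) V hV (by omega)
          · exact abs_nonneg _
          · positivity
      _ = S * hnorm l k V := by
          rw [hS, Finset.sum_mul]
          apply Finset.sum_congr rfl
          intro i _
          ring
  -- integral part
  have hIntBound : (l^2-x^2)^n *
      |∫ t in (0:ℝ)..x, (x-t)^e / (Nat.factorial e) * iteratedDeriv k V t|
      ≤ c₀ * hnorm l k V := by
    rcases le_total 0 x with hx0 | hx0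
    · have hkey : ∀ t ∈ Icc (0:ℝ) x, l^2 - x^2 ≤ l^2 - t^2 ∧ l * |x - t| ≤ l^2 - t^2 := by
        intro t ht
        constructor
        · nlinarith [ht.1, ht.2]
        · rw [abs_of_nonneg (by linarith [ht.2] : (0:ℝ) ≤ x - t)]
          nlinarith [mul_nonneg hl.le (sub_nonneg.mpr hx2),
            mul_nonneg ht.1 (sub_nonneg.mpr (le_trans ht.2 hx2))]
      rw [hc₀]
      exact term2 l hl n e (n+e) k rfl hp2 x 0 x hx0 (by linarith) hx2 h0x hkey V hV
    · have hsymm : (∫ t in (0:ℝ)..x, (x-t)^e / (Nat.factorial e) * iteratedDeriv k V t)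
          = - ∫ t in x..(0:ℝ), (x-t)^e / (Nat.factorial e) * iteratedDeriv k V t :=
        intervalIntegral.integral_symm x 0
      rw [hsymm, abs_neg]
      have hkey : ∀ t ∈ Icc x (0:ℝ), l^2 - x^2 ≤ l^2 - t^2 ∧ l * |x - t| ≤ l^2 - t^2 := by
        intro t ht
        constructor
        · nlinarith [ht.1, ht.2]
        · rw [abs_of_nonpos (by linarith [ht.1] : x - t ≤ 0)]
          have h1 : 0 ≤ l + x := by linarith
          have h2 : 0 ≤ l + t := by linarith [ht.1]
          nlinarith [mul_nonneg hl.le h1, mul_nonneg (neg_nonneg.mpr ht.2) h2]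
      rw [hc₀]
      exact term2 l hl n e (n+e) k rfl hp2 x x 0 hx0 hx1 (by linarith) h0x hkey V hV
  -- combine
  have hwb : (l^2-x^2)^n ≤ l^(2*n) := by
    calc (l^2-x^2)^n ≤ (l^2)^n := pow_le_pow_left₀ h0x (by nlinarith) n
      _ = l^(2*n) := (pow_mul l 2 n).symm
  calc (l^2 - x^2)^n * |iteratedDeriv d V x|
      = (l^2 - x^2)^n * |(∑ i ∈ Finset.range (e+1),
          (x - 0)^i / (Nat.factorial i) * iteratedDeriv (d+i) V 0)
          + ∫ t in (0:ℝ)..x, (x-t)^e / (Nat.factorial e) * iteratedDeriv k V t| := by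
        rw [← hrep]
    _ ≤ (l^2 - x^2)^n * (|∑ i ∈ Finset.range (e+1),
          (x - 0)^i / (Nat.factorial i) * iteratedDeriv (d+i) V 0|
          + |∫ t in (0:ℝ)..x, (x-t)^e / (Nat.factorial e) * iteratedDeriv k V t|) :=
        mul_le_mul_of_nonneg_left (abs_add_le _ _) (pow_nonneg h0x n)
    _ = (l^2 - x^2)^n * |∑ i ∈ Finset.range (e+1),
          (x - 0)^i / (Nat.factorial i) * iteratedDeriv (d+i) V 0|
          + (l^2 - x^2)^n * |∫ t in (0:ℝ)..x,
            (x-t)^e / (Nat.factorial e) * iteratedDeriv k V t| := by ring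
    _ ≤ l^(2*n) * (S * hnorm l k V) + c₀ * hnorm l k V := by
        apply add_le_add _ hIntBound
        exact mul_le_mul hwb hpoly (abs_nonneg _) (by positivity)
    _ ≤ (l^(2*n) * S + c₀ + 1) * hnorm l k V := by nlinarith [hnn]
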